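/- Let N = 2m+1 be an odd integer with N ≥ 3. Then there exist φ, ψ ∈ ℂ^N such that |P_φ(k/(2N−2))| = |P_ψ(k/(2N−2))| and |P_φ′(k/(2N−2))| = |P_ψ′(k/(2N−2))| for every k = 0, 1, …, 2N−3, and yet there is no λ ∈ ℂ with |λ| = 1 and ψ = λ·φ. -/

import Mathlib

open Real

/-- The analytic trigonometric polynomial `P_ψ(x) = ∑ ψ_j e^{2πijx}` associated to `ψ ∈ ℂ^N`. -/
noncomputable def trigPoly {N : ℕ} (ψ : Fin N → ℂ) (x : ℝ) : ℂ :=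
  ∑ j : Fin N, ψ j * Complex.exp (2 * Real.pi * Complex.I * (j : ℕ) * x)

/-- Its derivative `P_ψ′(x) = ∑ 2πij·ψ_j e^{2πijx}`. -/
noncomputable def trigPolyDeriv {N : ℕ} (ψ : Fin N → ℂ) (x : ℝ) : ℂ :=
  ∑ j : Fin N, 2 * Real.pi * Complex.I * (j : ℕ) * ψ j *
    Complex.exp (2 * Real.pi * Complex.I * (j : ℕ) * x)

/-!
The witnesses are `φ = e₀ + i·e_{N-1}` and `ψ = e₀ - i·e_{N-1}`. At the nodes `x_k = k/(2N-2)` the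
top frequency `e^{2πi(N-1)x_k} = (-1)^k` is real, so `P_φ(x_k) = 1 + i(-1)^k` and `P_ψ(x_k)` is its
complex conjugate, while `P_φ′(x_k) = -P_ψ′(x_k)`. Off the nodes `|P_φ|² = 2 - 2 sin(2π(N-1)x)` and
`|P_ψ|² = 2 + 2 sin(2π(N-1)x)` differ, and indeed `ψ` is not a unimodular multiple of `φ`.
-/

open Complex

section TrigPoly

variable {N : ℕ}

lemma trigPoly_add (φ ψ : Fin N → ℂ) (x : ℝ) :
    trigPoly (φ + ψ) x = trigPoly φ x + trigPoly ψ x := by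
  simp only [trigPoly, Pi.add_apply, add_mul, Finset.sum_add_distrib]

lemma trigPoly_single (j : Fin N) (a : ℂ) (x : ℝ) :
    trigPoly (Pi.single j a) x = a * exp (2 * π * I * (j : ℕ) * x) := by
  simp [trigPoly, Pi.single_apply]

lemma trigPolyDeriv_add (φ ψ : Fin N → ℂ) (x : ℝ) :
    trigPolyDeriv (φ + ψ) x = trigPolyDeriv φ x + trigPolyDeriv ψ x := by
  simp only [trigPolyDeriv, Pi.add_apply, mul_add, add_mul, Finset.sum_add_distrib]

lemma trigPolyDeriv_single (j : Fin N) (a : ℂ) (x : ℝ) :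
    trigPolyDeriv (Pi.single j a) x = 2 * π * I * (j : ℕ) * a * exp (2 * π * I * (j : ℕ) * x) := by
  simp [trigPolyDeriv, Pi.single_apply]

end TrigPoly

lemma exp_two_pi_I_mul_nat_mul_div_two_mul (M k : ℕ) (hM : M ≠ 0) :
    exp (2 * π * I * M * ((k / (2 * M) : ℝ) : ℂ)) = (-1) ^ k := by
  have : 2 * π * I * M * ((k / (2 * M) : ℝ) : ℂ) = k * (π * I) := by
    push_cast
    field_simp
  rw [this, Complex.exp_nat_mul, exp_pi_mul_I]

section Endpoints

variable {M : ℕ} (hM : M ≠ 0) (c : ℂ) (k : ℕ)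
include hM

lemma trigPoly_single_zero_add_single_last :
    trigPoly (Pi.single 0 1 + Pi.single (Fin.last M) c) (k / (2 * M)) = 1 + c * (-1) ^ k := by
  rw [trigPoly_add, trigPoly_single, trigPoly_single, Fin.val_last,
    exp_two_pi_I_mul_nat_mul_div_two_mul M k hM]
  simp

lemma trigPolyDeriv_single_zero_add_single_last :
    trigPolyDeriv (Pi.single 0 1 + Pi.single (Fin.last M) c) (k / (2 * M))
      = 2 * π * I * M * c * (-1) ^ k := by
  rw [trigPolyDeriv_add, trigPolyDeriv_single, trigPolyDeriv_single, Fin.val_last,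
    exp_two_pi_I_mul_nat_mul_div_two_mul M k hM]
  simp

end Endpoints

theorem undersampled_modulus_and_deriv_counterexample_general
    (N : ℕ) (hN : 3 ≤ N) :
    ∃ φ ψ : Fin N → ℂ,
      (∀ k : ℕ, k ≤ 2 * N - 3 →
        ‖trigPoly φ (k / (2 * N - 2))‖
          = ‖trigPoly ψ (k / (2 * N - 2))‖) ∧
      (∀ k : ℕ, k ≤ 2 * N - 3 →
        ‖trigPolyDeriv φ (k / (2 * N - 2))‖
          = ‖trigPolyDeriv ψ (k / (2 * N - 2))‖) ∧
      ¬ ∃ l : ℂ, ‖l‖ = 1 ∧ ψ = fun j => l * φ j := by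
  obtain ⟨M, rfl⟩ : ∃ M, N = M + 1 := ⟨N - 1, by omega⟩
  have hM : M ≠ 0 := by omega
  have hnode (k : ℕ) : (k / (2 * ((M + 1 : ℕ) : ℝ) - 2) : ℝ) = k / (2 * M) := by push_cast; ring_nf
  refine ⟨Pi.single 0 1 + Pi.single (Fin.last M) I,
    Pi.single 0 1 + Pi.single (Fin.last M) (-I), fun k _ => ?_, fun k _ => ?_, ?_⟩
  · rw [hnode, trigPoly_single_zero_add_single_last hM, trigPoly_single_zero_add_single_last hM,
      ← norm_conj]
    simp
  · rw [hnode, trigPolyDeriv_single_zero_add_single_last hM,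
      trigPolyDeriv_single_zero_add_single_last hM, mul_neg, neg_mul, norm_neg]
  · rintro ⟨l, -, hl⟩
    have hlast : Fin.last M ≠ 0 := Fin.ext_iff.not.mpr (by simpa using hM)
    have hl_zero := congr_fun hl 0
    have hl_last := congr_fun hl (Fin.last M)
    simp only [Pi.add_apply, Pi.single_eq_same, Pi.single_eq_of_ne hlast, Pi.single_eq_of_ne hlast.symm,
      add_zero, zero_add, mul_one] at hl_zero hl_last
    subst hl_zero
    norm_num [Complex.ext_iff] at hl_last

theorem undersampled_modulus_and_deriv_counterexample
    (N m : ℕ) (hNm : N = 2 * m + 1) (hN : 3 ≤ N) :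
    ∃ φ ψ : Fin N → ℂ,
      (∀ k : ℕ, k ≤ 2 * N - 3 →
        ‖trigPoly φ (k / (2 * N - 2))‖
          = ‖trigPoly ψ (k / (2 * N - 2))‖) ∧
      (∀ k : ℕ, k ≤ 2 * N - 3 →
        ‖trigPolyDeriv φ (k / (2 * N - 2))‖
          = ‖trigPolyDeriv ψ (k / (2 * N - 2))‖) ∧
      ¬ ∃ l : ℂ, ‖l‖ = 1 ∧ ψ = fun j => l * φ j :=
  undersampled_modulus_and_deriv_counterexample_general N hN
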